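/- arXiv:1908.01433 — 6 statements merged into one kernel-verified Lean document; each statement's English description precedes it below -/
import Mathlib

section
/- Let r ≥ 2 be an even integer, let k ≥ r be an integer and p ≥ r be a real number. If G_w is a weighted k-partite r-graph (with at least one edge of nonzero weight), then λ^(p)(G_w) / λ_min^(p)(G_w) ≥ λ^(p)(K_k^r) / λ_min^(p)(K_k^r). -/
/-!
Let `x` maximise `P_{G_w}` and `y` minimise `P_{K_k^r}` on the unit `ℓ^p`-sphere, and let
`η : [n] → [k]` be the `k`-partition. For each permutation `σ` of `[k]` consider the test vector
`z_σ i = x i * y (σ (η i))`. Because every edge of `G` is mapped injectively by `η`, averaging over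
`σ` turns `∑_σ P_{G_w}(z_σ)` into a multiple of `λ_min^(p)(K_k^r) · λ^(p)(G_w)`, while
`∑_σ ‖z_σ‖_p^p = (k-1)!`. Each term satisfies `P_{G_w}(z_σ) ≥ λ_min^(p)(G_w) ‖z_σ‖_p^r`, and as
`r ≤ p` the map `t ↦ t^(r/p)` is concave, so `∑_σ ‖z_σ‖_p^r ≤ k! k^(-r/p)`. Comparing with the
bound `λ^(p)(K_k^r) ≥ r! C(k,r) k^(-r/p)` given by the constant vector yields the inequality.
-/

open Finset

/-- Polynomial form of a weighted `r`-graph with edge set `E` and weights `w`: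
`P(x) = r! * ∑_{e ∈ E} w(e) * ∏_{i ∈ e} x i`. -/
noncomputable def polyForm (r : ℕ) {V : Type*} (E : Finset (Finset V))
    (w : Finset V → ℝ) (x : V → ℝ) : ℝ :=
  (r.factorial : ℝ) * ∑ e ∈ E, w e * ∏ i ∈ e, x i

/-- The ℓ^p norm of a vector. -/
noncomputable def lpNorm (p : ℝ) {V : Type*} [Fintype V] (x : V → ℝ) : ℝ :=
  (∑ i, |x i| ^ p) ^ (1 / p)

/-- `λ^(p)(G_w)`: the maximum of the polynomial form over the unit ℓ^p sphere. -/
noncomputable def lamMax (r : ℕ) (p : ℝ) {V : Type*} [Fintype V]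
    (E : Finset (Finset V)) (w : Finset V → ℝ) : ℝ :=
  sSup {t | ∃ x : V → ℝ, lpNorm p x = 1 ∧ polyForm r E w x = t}

/-- `λ_min^(p)(G_w)`: the minimum of the polynomial form over the unit ℓ^p sphere. -/
noncomputable def lamMin (r : ℕ) (p : ℝ) {V : Type*} [Fintype V]
    (E : Finset (Finset V)) (w : Finset V → ℝ) : ℝ :=
  sInf {t | ∃ x : V → ℝ, lpNorm p x = 1 ∧ polyForm r E w x = t}

/-- Edge set of the complete `r`-graph `K_k^r` on vertex set `Fin k`. -/
def completeEdges (r k : ℕ) : Finset (Finset (Fin k)) :=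
  Finset.univ.powersetCard r

open Equiv
open scoped Nat

section PermutationAverages

variable {α : Type*} [Fintype α] [DecidableEq α]

lemma card_filter_map_perm_eq {T T' : Finset α} (h : #T = #T') :
    #{σ : Perm α | T.map σ.toEmbedding = T'} = #{σ : Perm α | T.map σ.toEmbedding = T} := by
  obtain ⟨π, rfl⟩ := Perm.exists_map_finset_eq T T' h
  refine (Finset.card_equiv (Equiv.mulLeft π) fun σ => ?_).symm
  simp only [mem_filter, mem_univ, true_and, coe_mulLeft]
  rw [show (π * σ).toEmbedding = σ.toEmbedding.trans π.toEmbedding from rfl, ← map_map, map_inj]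

lemma choose_mul_sum_perm_map {r : ℕ} {T : Finset α} (hT : #T = r) (f : Finset α → ℝ) :
    ((Fintype.card α).choose r : ℝ) * ∑ σ : Perm α, f (T.map σ.toEmbedding) =
      (Fintype.card α)! * ∑ T' ∈ univ.powersetCard r, f T' := by
  have hmaps : ∀ σ ∈ (univ : Finset (Perm α)), T.map σ.toEmbedding ∈ univ.powersetCard r :=
    fun σ _ => mem_powersetCard.mpr ⟨subset_univ _, by rw [card_map, hT]⟩
  set c := #{σ : Perm α | T.map σ.toEmbedding = T}
  have hfiber : ∀ T' ∈ univ.powersetCard r, #{σ : Perm α | T.map σ.toEmbedding = T'} = c :=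
    fun T' hT' => card_filter_map_perm_eq (by rw [hT, (mem_powersetCard.mp hT').2])
  have hc : (Fintype.card α).choose r * c = (Fintype.card α)! := by
    rw [← Fintype.card_perm, ← card_univ (α := Perm α), card_eq_sum_card_fiberwise hmaps,
      sum_congr rfl hfiber, sum_const, card_powersetCard, card_univ, smul_eq_mul]
  rw [← sum_fiberwise_of_maps_to hmaps, mul_sum, mul_sum]
  refine sum_congr rfl fun T' hT' => ?_
  rw [sum_congr rfl fun σ hσ => congrArg f (mem_filter.mp hσ).2, sum_const, hfiber T' hT',
    nsmul_eq_mul, ← mul_assoc, ← hc, Nat.cast_mul]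

lemma card_mul_sum_perm_apply (j : α) (g : α → ℝ) :
    (Fintype.card α : ℝ) * ∑ σ : Perm α, g (σ j) = (Fintype.card α)! * ∑ v, g v := by
  have h := choose_mul_sum_perm_map (card_singleton j) fun s => ∑ v ∈ s, g v
  simp only [map_singleton, sum_singleton, Nat.choose_one_right, powersetCard_one,
    sum_map] at h
  simpa using h

end PermutationAverages

section LpNorm

variable {V : Type*} [Fintype V] {p : ℝ}

lemma sum_abs_rpow_nonneg (p : ℝ) (x : V → ℝ) : 0 ≤ ∑ i, |x i| ^ p :=
  sum_nonneg fun _ _ => Real.rpow_nonneg (abs_nonneg _) _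

lemma lpNorm_nonneg (x : V → ℝ) : 0 ≤ lpNorm p x :=
  Real.rpow_nonneg (sum_abs_rpow_nonneg p x) _

lemma lpNorm_eq_one_iff (hp : 0 < p) {x : V → ℝ} : lpNorm p x = 1 ↔ ∑ i, |x i| ^ p = 1 := by
  rw [lpNorm, one_div, Real.rpow_inv_eq (sum_abs_rpow_nonneg p x) zero_le_one hp.ne',
    Real.one_rpow]

lemma lpNorm_pow (x : V → ℝ) (r : ℕ) :
    lpNorm p x ^ r = (∑ i, |x i| ^ p) ^ ((r : ℝ) / p) := by
  rw [lpNorm, ← Real.rpow_natCast, ← Real.rpow_mul (sum_abs_rpow_nonneg p x),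
    one_div_mul_eq_div]

lemma lpNorm_eq_zero_iff (hp : 0 < p) {x : V → ℝ} : lpNorm p x = 0 ↔ x = 0 := by
  rw [lpNorm, Real.rpow_eq_zero (sum_abs_rpow_nonneg p x) (one_div_pos.mpr hp).ne',
    sum_eq_zero_iff_of_nonneg fun _ _ => Real.rpow_nonneg (abs_nonneg _) _, funext_iff]
  simp [Real.rpow_eq_zero (abs_nonneg _) hp.ne']

lemma lpNorm_pos (hp : 0 < p) {x : V → ℝ} (hx : x ≠ 0) : 0 < lpNorm p x :=
  (lpNorm_nonneg x).lt_of_ne' ((lpNorm_eq_zero_iff hp).not.mpr hx)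

lemma lpNorm_smul (hp : 0 < p) (c : ℝ) (x : V → ℝ) : lpNorm p (c • x) = |c| * lpNorm p x := by
  simp only [lpNorm, Pi.smul_apply, smul_eq_mul, abs_mul,
    Real.mul_rpow (abs_nonneg _) (abs_nonneg _), ← mul_sum]
  rw [Real.mul_rpow (Real.rpow_nonneg (abs_nonneg _) _) (sum_abs_rpow_nonneg p x), one_div,
    Real.rpow_rpow_inv (abs_nonneg _) hp.ne']

lemma lpNorm_inv_smul_self (hp : 0 < p) {x : V → ℝ} (hx : x ≠ 0) :
    lpNorm p ((lpNorm p x)⁻¹ • x) = 1 := by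
  rw [lpNorm_smul hp, abs_inv, abs_of_nonneg (lpNorm_nonneg x),
    inv_mul_cancel₀ (lpNorm_pos hp hx).ne']

lemma abs_le_one_of_lpNorm_eq_one (hp : 0 < p) {x : V → ℝ} (hx : lpNorm p x = 1) (i : V) :
    |x i| ≤ 1 := by
  have hi : |x i| ^ p ≤ 1 := (lpNorm_eq_one_iff hp).mp hx ▸
    single_le_sum (fun j _ => Real.rpow_nonneg (abs_nonneg (x j)) p) (mem_univ i)
  rwa [← Real.one_rpow p, Real.rpow_le_rpow_iff (abs_nonneg _) zero_le_one hp] at hi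

lemma continuous_lpNorm (hp : 0 < p) : Continuous (lpNorm p : (V → ℝ) → ℝ) :=
  (continuous_finsetSum _ fun i _ => ((continuous_apply i).abs).rpow_const
    fun _ => Or.inr hp.le).rpow_const fun _ => Or.inr (one_div_pos.mpr hp).le

lemma isCompact_lpNorm_eq_one (hp : 0 < p) : IsCompact {x : V → ℝ | lpNorm p x = 1} :=
  (isCompact_closedBall (0 : V → ℝ) 1).of_isClosed_subset
    (isClosed_eq (continuous_lpNorm hp) continuous_const) fun x hx => by
      rw [Metric.mem_closedBall, dist_zero_right, pi_norm_le_iff_of_nonneg zero_le_one]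
      exact fun i => (Real.norm_eq_abs _).trans_le (abs_le_one_of_lpNorm_eq_one hp hx i)

lemma exists_lpNorm_eq_one (hp : 0 < p) [Nonempty V] : ∃ x : V → ℝ, lpNorm p x = 1 :=
  ⟨_, lpNorm_inv_smul_self hp (one_ne_zero (α := V → ℝ))⟩

end LpNorm

section PolyForm

variable {V : Type*} {r : ℕ} {E : Finset (Finset V)} {w : Finset V → ℝ}

lemma continuous_polyForm (r : ℕ) (E : Finset (Finset V)) (w : Finset V → ℝ) :
    Continuous (polyForm r E w) :=
  continuous_const.mul <| continuous_finsetSum _ fun e _ =>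
    continuous_const.mul <| continuous_finsetProd e fun i _ => continuous_apply i

lemma polyForm_smul (hunif : ∀ e ∈ E, #e = r) (c : ℝ) (x : V → ℝ) :
    polyForm r E w (c • x) = c ^ r * polyForm r E w x := by
  simp only [polyForm, Pi.smul_apply, smul_eq_mul, prod_mul_distrib, prod_const, mul_sum]
  refine sum_congr rfl fun e he => ?_
  rw [hunif e he]
  ring

lemma polyForm_zero (hr : 0 < r) (hunif : ∀ e ∈ E, #e = r) : polyForm r E w 0 = 0 := by
  simpa [hr.ne'] using polyForm_smul (w := w) hunif 0 0

lemma polyForm_eq_of_support_subset (hunif : ∀ e ∈ E, #e = r) {e₀ : Finset V} (he₀ : e₀ ∈ E)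
    {x : V → ℝ} (hx : ∀ i ∉ e₀, x i = 0) :
    polyForm r E w x = r ! * (w e₀ * ∏ i ∈ e₀, x i) := by
  refine congrArg _ (sum_eq_single_of_mem e₀ he₀ fun e he hne => ?_)
  have : ¬ e ⊆ e₀ := fun hsub =>
    hne (eq_of_subset_of_card_le hsub (by rw [hunif e he, hunif e₀ he₀]))
  obtain ⟨i, hie, hie₀⟩ := not_subset.mp this
  rw [prod_eq_zero hie (hx i hie₀), mul_zero]

lemma exists_polyForm_neg (hunif : ∀ e ∈ E, #e = r) {e₀ : Finset V} (he₀ : e₀ ∈ E)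
    (hw₀ : w e₀ ≠ 0) (hr : 0 < r) : ∃ x : V → ℝ, polyForm r E w x < 0 := by
  classical
  obtain ⟨i₀, hi₀⟩ := card_pos.mp ((hunif e₀ he₀).symm ▸ hr)
  let x : V → ℝ := fun i => if i ∈ e₀ then (if i = i₀ then -w e₀ else 1) else 0
  refine ⟨x, ?_⟩
  rw [polyForm_eq_of_support_subset hunif he₀ fun i hi => if_neg hi,
    prod_congr rfl fun i hi => if_pos hi, prod_ite_eq' e₀ i₀ (fun _ => -w e₀), if_pos hi₀]
  rw [mul_neg, mul_neg, neg_lt_zero]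
  exact mul_pos (mod_cast r.factorial_pos) (mul_self_pos.mpr hw₀)

end PolyForm

section Extrema

variable {V : Type*} [Fintype V] {p : ℝ} {r : ℕ} {E : Finset (Finset V)} {w : Finset V → ℝ}

lemma isCompact_polyForm_values (hp : 0 < p) (r : ℕ) (E : Finset (Finset V))
    (w : Finset V → ℝ) : IsCompact {t | ∃ x : V → ℝ, lpNorm p x = 1 ∧ polyForm r E w x = t} :=
  (isCompact_lpNorm_eq_one hp).image (continuous_polyForm r E w)

lemma exists_lamMax (hp : 0 < p) [Nonempty V] (r : ℕ) (E : Finset (Finset V))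
    (w : Finset V → ℝ) : ∃ x : V → ℝ, lpNorm p x = 1 ∧ polyForm r E w x = lamMax r p E w :=
  (isCompact_polyForm_values hp r E w).sSup_mem <|
    (exists_lpNorm_eq_one hp).elim fun x hx => ⟨_, x, hx, rfl⟩

lemma exists_lamMin (hp : 0 < p) [Nonempty V] (r : ℕ) (E : Finset (Finset V))
    (w : Finset V → ℝ) : ∃ x : V → ℝ, lpNorm p x = 1 ∧ polyForm r E w x = lamMin r p E w :=
  (isCompact_polyForm_values hp r E w).sInf_mem <|
    (exists_lpNorm_eq_one hp).elim fun x hx => ⟨_, x, hx, rfl⟩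

lemma polyForm_le_lamMax (hp : 0 < p) {x : V → ℝ} (hx : lpNorm p x = 1) :
    polyForm r E w x ≤ lamMax r p E w :=
  le_csSup (isCompact_polyForm_values hp r E w).bddAbove ⟨x, hx, rfl⟩

lemma lamMin_le_polyForm (hp : 0 < p) {x : V → ℝ} (hx : lpNorm p x = 1) :
    lamMin r p E w ≤ polyForm r E w x :=
  csInf_le (isCompact_polyForm_values hp r E w).bddBelow ⟨x, hx, rfl⟩

lemma polyForm_normalize (hunif : ∀ e ∈ E, #e = r) (x : V → ℝ) :
    polyForm r E w ((lpNorm p x)⁻¹ • x) = (lpNorm p x ^ r)⁻¹ * polyForm r E w x := by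
  rw [polyForm_smul hunif, inv_pow]

lemma polyForm_le_lamMax_mul_lpNorm_pow (hp : 0 < p) (hunif : ∀ e ∈ E, #e = r)
    {x : V → ℝ} (hx : x ≠ 0) : polyForm r E w x ≤ lamMax r p E w * lpNorm p x ^ r := by
  have hpos : 0 < lpNorm p x ^ r := pow_pos (lpNorm_pos hp hx) r
  have := polyForm_le_lamMax (r := r) (E := E) (w := w) hp (lpNorm_inv_smul_self hp hx)
  rwa [polyForm_normalize hunif, inv_mul_le_iff₀ hpos, mul_comm] at this

lemma lamMin_mul_lpNorm_pow_le_polyForm (hp : 0 < p) (hr : 0 < r) (hunif : ∀ e ∈ E, #e = r)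
    (x : V → ℝ) : lamMin r p E w * lpNorm p x ^ r ≤ polyForm r E w x := by
  rcases eq_or_ne x 0 with rfl | hx
  · rw [(lpNorm_eq_zero_iff hp).mpr rfl, zero_pow hr.ne', mul_zero, polyForm_zero hr hunif]
  have hpos : 0 < lpNorm p x ^ r := pow_pos (lpNorm_pos hp hx) r
  have := lamMin_le_polyForm (r := r) (E := E) (w := w) hp (lpNorm_inv_smul_self hp hx)
  rwa [polyForm_normalize hunif, le_inv_mul_iff₀ hpos, mul_comm] at this

lemma lamMin_neg (hp : 0 < p) (hr : 0 < r) (hunif : ∀ e ∈ E, #e = r) {e₀ : Finset V}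
    (he₀ : e₀ ∈ E) (hw₀ : w e₀ ≠ 0) : lamMin r p E w < 0 := by
  obtain ⟨x, hx⟩ := exists_polyForm_neg hunif he₀ hw₀ hr
  have hx0 : x ≠ 0 := by rintro rfl; exact hx.ne (polyForm_zero hr hunif)
  exact neg_of_mul_neg_left ((lamMin_mul_lpNorm_pow_le_polyForm hp hr hunif x).trans_lt hx)
    (pow_pos (lpNorm_pos hp hx0) r).le

end Extrema

lemma sum_rpow_le_card_mul_rpow_div {ι : Type*} (s : Finset ι) {f : ι → ℝ}
    (hf : ∀ i ∈ s, 0 ≤ f i) {q : ℝ} (hq₀ : 0 ≤ q) (hq₁ : q ≤ 1) :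
    ∑ i ∈ s, f i ^ q ≤ #s * ((∑ i ∈ s, f i) / #s) ^ q := by
  rcases s.eq_empty_or_nonempty with rfl | hs
  · simp
  have hm : (0 : ℝ) < #s := mod_cast hs.card_pos
  have := (Real.concaveOn_rpow hq₀ hq₁).le_map_sum (t := s) (w := fun _ => (#s : ℝ)⁻¹)
    (fun _ _ => inv_nonneg.mpr hm.le) (by rw [sum_const, nsmul_eq_mul, mul_inv_cancel₀ hm.ne'])
    hf
  simp only [smul_eq_mul] at this
  rwa [← mul_sum, ← mul_sum, inv_mul_eq_div, inv_mul_eq_div, div_le_iff₀' hm] at this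

lemma factorial_mul_choose_le_lamMax_mul {p : ℝ} (hp : 0 < p) {k : ℕ} (hk : 0 < k) (r : ℕ) :
    (r ! * k.choose r : ℝ) ≤
      lamMax r p (completeEdges r k) (fun _ => 1) * (k : ℝ) ^ ((r : ℝ) / p) := by
  have : Nonempty (Fin k) := Fin.pos_iff_nonempty.mp hk
  have hunif : ∀ e ∈ completeEdges r k, #e = r := fun e he => (mem_powersetCard.mp he).2
  have h := polyForm_le_lamMax_mul_lpNorm_pow (w := fun _ => 1) hp hunif one_ne_zero
  simpa [polyForm, completeEdges, lpNorm_pow] using h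

section Averaging

variable {α V : Type*} [Fintype α] [DecidableEq α]

lemma card_mul_sum_perm_sum_abs_rpow [Fintype V] (η : V → α) (x : V → ℝ) (y : α → ℝ) (p : ℝ) :
    (Fintype.card α : ℝ) * ∑ σ : Perm α, ∑ i, |x i * y (σ (η i))| ^ p =
      (Fintype.card α)! * ((∑ i, |x i| ^ p) * ∑ v, |y v| ^ p) := by
  simp only [abs_mul, Real.mul_rpow (abs_nonneg _) (abs_nonneg _)]
  rw [sum_comm, mul_sum, sum_mul, mul_sum]
  refine sum_congr rfl fun i _ => ?_
  rw [← mul_sum, mul_left_comm, card_mul_sum_perm_apply (η i) fun v => |y v| ^ p]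
  ring

lemma factorial_mul_choose_mul_sum_perm_polyForm {r : ℕ} {E : Finset (Finset V)}
    {w : Finset V → ℝ} (hunif : ∀ e ∈ E, #e = r) {η : V → α}
    (hη : ∀ e ∈ E, Set.InjOn η (e : Set V)) (x : V → ℝ) (y : α → ℝ) :
    (r ! * (Fintype.card α).choose r : ℝ) *
        ∑ σ : Perm α, polyForm r E w (fun i => x i * y (σ (η i))) =
      (Fintype.card α)! * (polyForm r (univ.powersetCard r) (fun _ => 1) y * polyForm r E w x) := by
  set Q := ∑ T ∈ univ.powersetCard r, ∏ t ∈ T, y t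
  have hedge : ∀ e ∈ E, ((Fintype.card α).choose r : ℝ) *
      ∑ σ : Perm α, ∏ i ∈ e, y (σ (η i)) = (Fintype.card α)! * Q := by
    intro e he
    have hσ (σ : Perm α) : ∏ i ∈ e, y (σ (η i)) = ∏ t ∈ (e.image η).map σ.toEmbedding, y t := by
      rw [prod_map, prod_image (hη e he)]
      rfl
    simp only [hσ]
    exact choose_mul_sum_perm_map ((card_image_of_injOn (hη e he)).trans (hunif e he))
      fun T => ∏ t ∈ T, y t
  have hsum : ((Fintype.card α).choose r : ℝ) *
      ∑ σ : Perm α, polyForm r E w (fun i => x i * y (σ (η i))) =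
        r ! * ∑ e ∈ E, (w e * ∏ i ∈ e, x i) * ((Fintype.card α)! * Q) := by
    simp only [polyForm, prod_mul_distrib, ← mul_sum]
    rw [sum_comm, mul_left_comm, mul_sum]
    refine congrArg _ (sum_congr rfl fun e he => ?_)
    rw [← hedge e he, ← mul_sum, ← mul_sum]
    ring
  have hK : polyForm r (univ.powersetCard r) (fun _ => 1) y = r ! * Q := by
    simp only [polyForm, one_mul, Q]
  rw [mul_assoc, hsum, hK, polyForm, ← sum_mul]
  ring

lemma lamMin_mul_le_polyForm_mul_polyForm [Fintype V] {p : ℝ} {r : ℕ} (hr : 0 < r)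
    (hrp : (r : ℝ) ≤ p) {E : Finset (Finset V)} {w : Finset V → ℝ} (hunif : ∀ e ∈ E, #e = r)
    {η : V → α} (hη : ∀ e ∈ E, Set.InjOn η (e : Set V)) (hb : lamMin r p E w ≤ 0)
    {x : V → ℝ} (hx : lpNorm p x = 1) {y : α → ℝ} (hy : lpNorm p y = 1) :
    lamMin r p E w * (r ! * (Fintype.card α).choose r) ≤
      (Fintype.card α : ℝ) ^ ((r : ℝ) / p) *
        (polyForm r (univ.powersetCard r) (fun _ => 1) y * polyForm r E w x) := by
  have hp : 0 < p := (Nat.cast_pos.mpr hr).trans_le hrp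
  set m := Fintype.card α with hm_def
  set z : Perm α → V → ℝ := fun σ i => x i * y (σ (η i))
  have hm : (0 : ℝ) < m := by
    obtain ⟨v, -⟩ := Function.ne_iff.mp fun h : y = 0 =>
      zero_ne_one (((lpNorm_eq_zero_iff hp).mpr h).symm.trans hy)
    exact mod_cast Fintype.card_pos_iff.mpr ⟨v⟩
  have hfact : (0 : ℝ) < m ! := mod_cast m.factorial_pos
  have hnorms : ∑ σ, ∑ i, |z σ i| ^ p = m ! / m := by
    rw [eq_div_iff hm.ne', mul_comm, card_mul_sum_perm_sum_abs_rpow,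
      (lpNorm_eq_one_iff hp).mp hx, (lpNorm_eq_one_iff hp).mp hy, mul_one, mul_one]
  have hpowers : ∑ σ, lpNorm p (z σ) ^ r ≤ m ! / m ^ ((r : ℝ) / p) := by
    calc ∑ σ, lpNorm p (z σ) ^ r = ∑ σ, (∑ i, |z σ i| ^ p) ^ ((r : ℝ) / p) := by
          simp only [lpNorm_pow]
      _ ≤ #(univ : Finset (Perm α)) * ((∑ σ, ∑ i, |z σ i| ^ p) / #univ) ^ ((r : ℝ) / p) :=
          sum_rpow_le_card_mul_rpow_div _
            (fun σ _ => sum_abs_rpow_nonneg p (z σ))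
            (div_nonneg (Nat.cast_nonneg r) hp.le) ((div_le_one hp).mpr hrp)
      _ = m ! / m ^ ((r : ℝ) / p) := by
          rw [hnorms, card_univ, Fintype.card_perm, ← hm_def, div_div_cancel_left' hfact.ne',
            Real.inv_rpow hm.le, ← div_eq_mul_inv]
  have hsum : lamMin r p E w * (m ! / m ^ ((r : ℝ) / p)) ≤ ∑ σ, polyForm r E w (z σ) :=
    calc lamMin r p E w * (m ! / m ^ ((r : ℝ) / p))
        ≤ lamMin r p E w * ∑ σ, lpNorm p (z σ) ^ r := mul_le_mul_of_nonpos_left hpowers hb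
      _ = ∑ σ, lamMin r p E w * lpNorm p (z σ) ^ r := mul_sum _ _ _
      _ ≤ ∑ σ, polyForm r E w (z σ) :=
          sum_le_sum fun σ _ => lamMin_mul_lpNorm_pow_le_polyForm hp hr hunif (z σ)
  calc lamMin r p E w * (r ! * m.choose r)
      = m ^ ((r : ℝ) / p) / m ! *
          ((r ! * m.choose r) * (lamMin r p E w * (m ! / m ^ ((r : ℝ) / p)))) := by
        field_simp
    _ ≤ m ^ ((r : ℝ) / p) / m ! * ((r ! * m.choose r) * ∑ σ, polyForm r E w (z σ)) := by
        gcongr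
    _ = _ := by
        rw [factorial_mul_choose_mul_sum_perm_polyForm hunif hη, ← hm_def]
        field_simp

end Averaging

theorem hoffman_hypergraph_general (r k n : ℕ) (p : ℝ)
    (hr2 : 2 ≤ r) (hkr : r ≤ k) (hp : (r : ℝ) ≤ p)
    (E : Finset (Finset (Fin n))) (w : Finset (Fin n) → ℝ)
    (hunif : ∀ e ∈ E, e.card = r)
    (hpart : ∃ η : Fin n → Fin k, ∀ e ∈ E, Set.InjOn η (e : Set (Fin n)))
    (hw : ∃ e ∈ E, w e ≠ 0) :
    lamMax r p E w / lamMin r p E w ≥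
      lamMax r p (completeEdges r k) (fun _ => 1) /
        lamMin r p (completeEdges r k) (fun _ => 1) := by
  obtain ⟨η, hη⟩ := hpart
  obtain ⟨e₀, he₀, hw₀⟩ := hw
  have hr : 0 < r := by omega
  have hk : 0 < k := by omega
  have hp₀ : 0 < p := (Nat.cast_pos.mpr hr).trans_le hp
  have hunifK : ∀ e ∈ completeEdges r k, #e = r := fun e he => (mem_powersetCard.mp he).2
  obtain ⟨T, hT⟩ : (completeEdges r k).Nonempty := powersetCard_nonempty.mpr (by simpa using hkr)
  have : Nonempty (Fin n) := (card_pos.mp ((hunif e₀ he₀).symm ▸ hr)).elim fun i _ => ⟨i⟩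
  have : Nonempty (Fin k) := Fin.pos_iff_nonempty.mp hk
  obtain ⟨x, hx, hxa⟩ := exists_lamMax hp₀ r E w
  obtain ⟨y, hy, hyd⟩ := exists_lamMin hp₀ r (completeEdges r k) fun _ => 1
  have hb := lamMin_neg hp₀ hr hunif he₀ hw₀
  have hd := lamMin_neg (w := fun _ => 1) hp₀ hr hunifK hT one_ne_zero
  have hc := factorial_mul_choose_le_lamMax_mul hp₀ hk r
  have key := lamMin_mul_le_polyForm_mul_polyForm hr hp hunif hη hb.le hx hy
  rw [hxa, Fintype.card_fin] at key
  set a := lamMax r p E w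
  set b := lamMin r p E w
  set c := lamMax r p (completeEdges r k) (fun _ => 1)
  set d := lamMin r p (completeEdges r k) (fun _ => 1)
  have hkq : 0 < (k : ℝ) ^ ((r : ℝ) / p) := Real.rpow_pos_of_pos (mod_cast hk) _
  have hbc : b * c ≤ d * a := by
    refine le_of_mul_le_mul_left ?_ hkq
    calc (k : ℝ) ^ ((r : ℝ) / p) * (b * c) = b * (c * (k : ℝ) ^ ((r : ℝ) / p)) := by ring
      _ ≤ b * (r ! * k.choose r) := mul_le_mul_of_nonpos_left hc hb.le
      _ ≤ (k : ℝ) ^ ((r : ℝ) / p) * (d * a) := hyd ▸ key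
  rw [ge_iff_le, div_le_iff_of_neg hd, div_mul_eq_mul_div, div_le_iff_of_neg hb]
  linarith

/-- **Theorem 1 (inequality part).** Let `r ≥ 2` be even, `k ≥ r`, and `p ≥ r`.
If `G_w` is a weighted `k`-partite `r`-graph with at least one edge of nonzero
weight, then `λ^(p)(G_w)/λ_min^(p)(G_w) ≥ λ^(p)(K_k^r)/λ_min^(p)(K_k^r)`. -/
theorem hoffman_hypergraph (r k n : ℕ) (p : ℝ)
    (hr2 : 2 ≤ r) (hre : Even r) (hkr : r ≤ k) (hp : (r : ℝ) ≤ p)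
    (E : Finset (Finset (Fin n))) (w : Finset (Fin n) → ℝ)
    (hunif : ∀ e ∈ E, e.card = r)
    (hpart : ∃ η : Fin n → Fin k, ∀ e ∈ E, Set.InjOn η (e : Set (Fin n)))
    (hw : ∃ e ∈ E, w e ≠ 0) :
    lamMax r p E w / lamMin r p E w ≥
      lamMax r p (completeEdges r k) (fun _ => 1) /
        lamMin r p (completeEdges r k) (fun _ => 1) :=
  hoffman_hypergraph_general r k n p hr2 hkr hp E w hunif hpart hw
end

section
/- Let k ≥ r ≥ 2 be integers and p ≥ 1 be a real number. Then λ^(p)(K_k^r) = k^{1−r/p} · (k−1)(k−2)⋯(k−r+1), i.e., the maximum of P_{K_k^r}(x) over x ∈ ℝ^k with |x|_p = 1 equals k^{1−r/p} ∏_{i=1}^{r−1} (k−i). -/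
open Finset

/-!
The constant vector with entries `k^(-1/p)` attains the value. Conversely, with `y = |x|`,
`P(x) ≤ r! e_r(y) ≤ r! C(k,r) (∑ y / k)^r` by Maclaurin's inequality, and
`∑ y / k ≤ k^(-1/p) ‖x‖_p` by the power mean inequality. Maclaurin's inequality follows by
induction on the number of variables from `e_{r+1}(s ∪ {a}) = e_{r+1}(s) + y a e_r(s)`:
the inductive step reduces, via Pascal's rule, to Bernoulli's inequality for the new mean.
-/

theorem pow_succ_add_mul_sub_le_pow_succ {u m : ℝ} (hu : 0 ≤ u) (hm : 0 ≤ m) (n : ℕ) :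
    u ^ (n + 1) + (n + 1) * u ^ n * (m - u) ≤ m ^ (n + 1) := by
  rcases hu.eq_or_lt with rfl | hu
  · cases n <;> simp [pow_nonneg hm]
  have bernoulli := one_add_mul_le_pow (a := (m - u) / u)
    (by rw [le_div_iff₀ hu]; linarith) (n + 1)
  calc u ^ (n + 1) + (n + 1) * u ^ n * (m - u)
      = u ^ (n + 1) * (1 + ((n + 1 : ℕ) : ℝ) * ((m - u) / u)) := by
        field_simp; push_cast; ring
    _ ≤ u ^ (n + 1) * (1 + (m - u) / u) ^ (n + 1) :=
        mul_le_mul_of_nonneg_left bernoulli (by positivity)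
    _ = m ^ (n + 1) := by rw [← mul_pow]; field_simp; ring

/-- The inductive step of Maclaurin's inequality: `u` is the old mean, `m` the new one. -/
theorem choose_mul_pow_add_le {u a m : ℝ} (hu : 0 ≤ u) (ha : 0 ≤ a) {k : ℕ}
    (hm : ((k : ℝ) + 1) * m = k * u + a) (j : ℕ) :
    (k.choose (j + 1) : ℝ) * u ^ (j + 1) + a * ((k.choose j : ℝ) * u ^ j)
      ≤ ((k + 1).choose (j + 1) : ℝ) * m ^ (j + 1) := by
  have hm0 : 0 ≤ m := nonneg_of_mul_nonneg_right (by rw [hm]; positivity) (by positivity)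
  have pascal : ((k + 1).choose (j + 1) : ℝ) = k.choose j + k.choose (j + 1) := by
    exact_mod_cast Nat.choose_succ_succ' k j
  have absorb : ((k + 1).choose (j + 1) : ℝ) * (j + 1) = (k + 1) * k.choose j := by
    exact_mod_cast (Nat.add_one_mul_choose_eq k j).symm
  have tangent := mul_le_mul_of_nonneg_left (pow_succ_add_mul_sub_le_pow_succ hu hm0 j)
    (Nat.cast_nonneg ((k + 1).choose (j + 1)) : (0 : ℝ) ≤ _)
  linear_combination tangent - u ^ j * (k.choose j : ℝ) * hm
    - u ^ j * (m - u) * absorb - u ^ (j + 1) * pascal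

theorem Finset.sum_powersetCard_succ_insert_prod {V : Type*} [DecidableEq V] {a : V}
    {s : Finset V} (ha : a ∉ s) (y : V → ℝ) (j : ℕ) :
    ∑ e ∈ (insert a s).powersetCard (j + 1), ∏ i ∈ e, y i
      = ∑ e ∈ s.powersetCard (j + 1), ∏ i ∈ e, y i
        + y a * ∑ e ∈ s.powersetCard j, ∏ i ∈ e, y i := by
  have not_mem {e : Finset V} (he : e ∈ s.powersetCard j) : a ∉ e :=
    fun h => ha ((Finset.mem_powersetCard.1 he).1 h)
  rw [Finset.powersetCard_succ_insert ha, Finset.sum_union, Finset.sum_image, Finset.mul_sum]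
  · exact congrArg _ (Finset.sum_congr rfl fun e he => Finset.prod_insert (not_mem he))
  · intro e he f hf hef
    rw [← Finset.erase_insert (not_mem he), hef, Finset.erase_insert (not_mem hf)]
  · refine Finset.disjoint_left.2 fun e he he' => ?_
    obtain ⟨f, -, rfl⟩ := Finset.mem_image.1 he'
    exact ha ((Finset.mem_powersetCard.1 he).1 (Finset.mem_insert_self a f))

/-- Maclaurin's inequality. -/
theorem Finset.sum_powersetCard_prod_le {V : Type*} [DecidableEq V] (s : Finset V)
    {y : V → ℝ} (hy : ∀ i ∈ s, 0 ≤ y i) (r : ℕ) :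
    ∑ e ∈ s.powersetCard r, ∏ i ∈ e, y i
      ≤ (s.card.choose r : ℝ) * ((∑ i ∈ s, y i) / s.card) ^ r := by
  induction s using Finset.induction_on generalizing r with
  | empty =>
    cases r with
    | zero => simp
    | succ j => simp [Finset.powersetCard_eq_empty.2 (by simp : (∅ : Finset V).card < j + 1)]
  | insert a s ha ih =>
    cases r with
    | zero => simp
    | succ j =>
      have hy' : ∀ i ∈ s, 0 ≤ y i := fun i hi => hy i (Finset.mem_insert_of_mem hi)
      have hmean : ((s.card : ℝ) + 1) * ((∑ i ∈ insert a s, y i) / (s.card + 1 : ℕ))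
          = s.card * ((∑ i ∈ s, y i) / s.card) + y a := by
        rcases s.eq_empty_or_nonempty with rfl | hs
        · simp
        · rw [Finset.sum_insert ha]
          field_simp [hs.card_pos.ne']
          push_cast
          ring
      rw [Finset.sum_powersetCard_succ_insert_prod ha, Finset.card_insert_of_notMem ha]
      calc _ ≤ (s.card.choose (j + 1) : ℝ) * ((∑ i ∈ s, y i) / s.card) ^ (j + 1)
            + y a * ((s.card.choose j : ℝ) * ((∑ i ∈ s, y i) / s.card) ^ j) :=
          add_le_add (ih hy' _) (mul_le_mul_of_nonneg_left (ih hy' _) (hy a (by simp)))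
        _ ≤ _ := choose_mul_pow_add_le
            (div_nonneg (Finset.sum_nonneg hy') s.card.cast_nonneg) (hy a (by simp)) hmean j

theorem sum_abs_div_card_le_lpNorm {V : Type*} [Fintype V] {p : ℝ} (hp : 1 ≤ p) (x : V → ℝ) :
    (∑ i, |x i|) / Fintype.card V ≤ (Fintype.card V : ℝ) ^ (-p⁻¹) * lpNorm p x := by
  have hn : (0 : ℝ) ≤ Fintype.card V := Nat.cast_nonneg _
  rcases hn.eq_or_lt with hn0 | hn
  · rw [← hn0, div_zero]
    unfold lpNorm
    positivity
  have power_mean := Real.arith_mean_le_rpow_mean Finset.univ (fun _ => (Fintype.card V : ℝ)⁻¹)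
    (fun i => |x i|) (fun _ _ => by positivity)
    (by simp [Finset.card_univ, hn.ne']) (fun _ _ => abs_nonneg _) hp
  rw [← Finset.mul_sum, ← Finset.mul_sum, Real.mul_rpow (by positivity)
    (Finset.sum_nonneg fun _ _ => by positivity), Real.inv_rpow hn.le, ← Real.rpow_neg hn.le,
    inv_mul_eq_div] at power_mean
  simpa only [lpNorm, one_div] using power_mean

theorem lpNorm_const {V : Type*} [Fintype V] {p : ℝ} (hp : p ≠ 0) (c : ℝ) :
    lpNorm p (fun _ : V => c) = (Fintype.card V : ℝ) ^ p⁻¹ * |c| := by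
  rw [lpNorm, Finset.sum_const, Finset.card_univ, nsmul_eq_mul, one_div,
    Real.mul_rpow (Nat.cast_nonneg _) (by positivity), Real.rpow_rpow_inv (abs_nonneg c) hp]

theorem polyForm_completeEdges (r k : ℕ) (x : Fin k → ℝ) :
    polyForm r (completeEdges r k) (fun _ => 1) x
      = r.factorial * ∑ e ∈ Finset.univ.powersetCard r, ∏ i ∈ e, x i := by
  simp [polyForm, completeEdges]

theorem polyForm_completeEdges_const (r k : ℕ) (c : ℝ) :
    polyForm r (completeEdges r k) (fun _ => 1) (fun _ => c)
      = r.factorial * k.choose r * c ^ r := by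
  rw [polyForm_completeEdges, Finset.sum_congr rfl fun e he => by
    rw [Finset.prod_const, (Finset.mem_powersetCard.1 he).2]]
  simp [mul_assoc]

theorem polyForm_completeEdges_le (r : ℕ) {k : ℕ} {p : ℝ} (hp : 1 ≤ p) (x : Fin k → ℝ) :
    polyForm r (completeEdges r k) (fun _ => 1) x
      ≤ r.factorial * k.choose r * ((k : ℝ) ^ (-p⁻¹) * lpNorm p x) ^ r := by
  have mean_le := sum_abs_div_card_le_lpNorm hp x
  rw [Fintype.card_fin] at mean_le
  calc polyForm r (completeEdges r k) (fun _ => 1) x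
      ≤ r.factorial * ∑ e ∈ Finset.univ.powersetCard r, ∏ i ∈ e, |x i| := by
        rw [polyForm_completeEdges]
        gcongr _ * ?_
        exact Finset.sum_le_sum fun e _ => (le_abs_self _).trans_eq (Finset.abs_prod e x)
    _ ≤ r.factorial * (k.choose r * ((∑ i, |x i|) / k) ^ r) := by
        gcongr
        simpa using Finset.univ.sum_powersetCard_prod_le (fun i _ => abs_nonneg (x i)) r
    _ ≤ r.factorial * k.choose r * ((k : ℝ) ^ (-p⁻¹) * lpNorm p x) ^ r := by
        rw [← mul_assoc]
        gcongr

theorem factorial_mul_choose_eq_mul_prod_Icc {r k : ℕ} (hr : 1 ≤ r) (hrk : r ≤ k) :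
    (r.factorial : ℝ) * k.choose r = k * ∏ i ∈ Finset.Icc 1 (r - 1), ((k : ℝ) - i) := by
  obtain ⟨n, rfl⟩ := Nat.exists_eq_add_of_le' hr
  have desc : (k.descFactorial (n + 1) : ℝ) = ∏ i ∈ Finset.range (n + 1), ((k : ℝ) - i) := by
    rw [Nat.descFactorial_eq_prod_range, Nat.cast_prod]
    exact Finset.prod_congr rfl fun i hi => Nat.cast_sub (by simp at hi; omega)
  rw [← Nat.cast_mul, ← Nat.descFactorial_eq_factorial_mul_choose, desc,
    Finset.prod_range_succ', Nat.add_sub_cancel, ← Finset.Ico_add_one_right_eq_Icc,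
    Finset.prod_Ico_eq_prod_range]
  simp [mul_comm, add_comm]

/-- Equation (9) of the paper: for `k ≥ r ≥ 2` and real `p ≥ 1`, the maximum of
`P_{K_k^r}(x)` over the unit ℓ^p sphere equals `k^{1-r/p} (k-1)(k-2)⋯(k-r+1)`. -/
theorem lamMax_complete (r k : ℕ) (p : ℝ)
    (hr2 : 2 ≤ r) (hkr : r ≤ k) (hp : 1 ≤ p) :
    IsGreatest
      {t | ∃ x : Fin k → ℝ, lpNorm p x = 1 ∧
        polyForm r (completeEdges r k) (fun _ => 1) x = t}
      ((k : ℝ) ^ (1 - (r : ℝ) / p) * ∏ i ∈ Finset.Icc 1 (r - 1), ((k : ℝ) - (i : ℝ))) := by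
  have hk : (0 : ℝ) < k := by exact_mod_cast (by omega : 0 < k)
  have hp0 : p ≠ 0 := by positivity
  set c := (k : ℝ) ^ (-p⁻¹) with hc
  have hvalue : (k : ℝ) ^ (1 - (r : ℝ) / p) * ∏ i ∈ Finset.Icc 1 (r - 1), ((k : ℝ) - i)
      = r.factorial * k.choose r * c ^ r := by
    rw [factorial_mul_choose_eq_mul_prod_Icc (by omega) hkr, hc, ← Real.rpow_natCast,
      ← Real.rpow_mul hk.le, sub_eq_add_neg, Real.rpow_add hk, Real.rpow_one]
    ring_nf
  have hc_norm : lpNorm p (fun _ : Fin k => c) = 1 := by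
    rw [lpNorm_const hp0, Fintype.card_fin, abs_of_pos (by positivity), hc,
      ← Real.rpow_add hk, add_neg_cancel, Real.rpow_zero]
  rw [hvalue]
  refine ⟨⟨fun _ => c, hc_norm, polyForm_completeEdges_const r k c⟩, ?_⟩
  rintro _ ⟨x, hx, rfl⟩
  simpa [hx] using polyForm_completeEdges_le r hp x
end

section
/- Let k ≥ r ≥ 2 be integers, let G_w be a weighted r-graph on vertex set [n], and let η : [n] → [k] be a map that is injective on every edge of G_w (a proper k-partition). For x ∈ ℝ^n and y ∈ ℝ^k and each permutation σ of [k], define z_σ ∈ ℝ^n by (z_σ)_i = x_i · y_{σ(η(i))}. Then ∑_{σ ∈ S_k} P_{G_w}(z_σ) = (k−r)! · P_{G_w}(x) · P_{K_k^r}(y), where the sum is over all k! permutations σ of [k]. -/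
open Finset

/-!
Writing `∏_{i ∈ e} y (σ (η i))` as `∏_{j ∈ σ(η(e))} y j`, the sum over `σ` becomes a sum
over the `r`-subsets `t` of `[k]`, each weighted by the number of permutations carrying
`η(e)` onto `t`. Since permutations act transitively on `r`-subsets, these `C(k, r)` fibres,
which partition `S_k`, all have the same size, namely `k! / C(k, r) = r! (k - r)!`.
-/

open scoped Nat

namespace Equiv.Perm

variable {α : Type*} [DecidableEq α]

theorem exists_image_eq_of_card_eq {s t : Finset α} (h : #s = #t) :
    ∃ τ : Perm α, s.image τ = t := by
  have := Set.powersetCard.isPretransitive (α := α) (n := #s)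
  obtain ⟨τ, hτ⟩ := MulAction.exists_smul_eq (Perm α)
    (⟨s, rfl⟩ : Set.powersetCard α #s) ⟨t, h.symm⟩
  exact ⟨τ, by simpa [smul_finset_def, smul_def] using congrArg Subtype.val hτ⟩

variable [Fintype α]

theorem card_filter_image_eq_of_card_eq {s t : Finset α} (h : #s = #t) :
    #{σ : Perm α | s.image σ = t} = #{σ : Perm α | s.image σ = s} := by
  obtain ⟨τ, rfl⟩ := exists_image_eq_of_card_eq h
  refine (card_equiv (Equiv.mulLeft τ) fun σ => ?_).symm
  simp [← image_image, (image_injective τ.injective).eq_iff]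

theorem card_filter_image_eq_self (s : Finset α) :
    #{σ : Perm α | s.image σ = s} = (#s)! * (Fintype.card α - #s)! := by
  have hfib : Fintype.card (Perm α) =
      ∑ t ∈ powersetCard #s univ, #{σ : Perm α | s.image σ = t} :=
    card_eq_sum_card_fiberwise fun σ _ => by simp [card_image_of_injective s σ.injective]
  rw [sum_congr rfl fun t ht => card_filter_image_eq_of_card_eq (mem_powersetCard_univ.1 ht).symm,
    sum_const, card_powersetCard, card_univ, Fintype.card_perm, smul_eq_mul,
    ← Nat.choose_mul_factorial_mul_factorial (card_le_univ s), mul_assoc] at hfib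
  exact (Nat.eq_of_mul_eq_mul_left (Nat.choose_pos (card_le_univ s)) hfib).symm

theorem sum_prod_comp {R : Type*} [CommSemiring R] (y : α → R) (s : Finset α) :
    ∑ σ : Perm α, ∏ j ∈ s, y (σ j) =
      ((#s)! * (Fintype.card α - #s)!) • ∑ t ∈ powersetCard #s univ, ∏ j ∈ t, y j := by
  have himage (σ : Perm α) : ∏ j ∈ s, y (σ j) = ∏ j ∈ s.image σ, y j :=
    (prod_image fun a _ b _ h => σ.injective h).symm
  simp_rw [himage]
  rw [← sum_fiberwise_of_maps_to (t := powersetCard #s univ) (g := fun σ : Perm α => s.image σ)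
    (fun σ _ => by simp [card_image_of_injective s σ.injective]), smul_sum]
  refine sum_congr rfl fun t ht => ?_
  rw [sum_congr rfl fun σ hσ => by rw [(mem_filter.1 hσ).2], sum_const,
    card_filter_image_eq_of_card_eq (mem_powersetCard_univ.1 ht).symm, card_filter_image_eq_self]

theorem sum_prod_comp_of_injOn {R β : Type*} [CommSemiring R] (y : α → R) {f : β → α}
    {e : Finset β} (hf : Set.InjOn f e) :
    ∑ σ : Perm α, ∏ i ∈ e, y (σ (f i)) =
      ((#e)! * (Fintype.card α - #e)!) • ∑ t ∈ powersetCard #e univ, ∏ j ∈ t, y j := by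
  classical
  have himage (σ : Perm α) : ∏ i ∈ e, y (σ (f i)) = ∏ j ∈ e.image f, y (σ j) :=
    (prod_image (f := fun j => y (σ j)) hf).symm
  simp_rw [himage, sum_prod_comp, card_image_of_injOn hf]

end Equiv.Perm

theorem sum_perm_polyForm_general (r k n : ℕ)
    (E : Finset (Finset (Fin n))) (w : Finset (Fin n) → ℝ)
    (hunif : ∀ e ∈ E, e.card = r)
    (η : Fin n → Fin k) (hη : ∀ e ∈ E, Set.InjOn η (e : Set (Fin n)))
    (x : Fin n → ℝ) (y : Fin k → ℝ) :
    ∑ σ : Equiv.Perm (Fin k), polyForm r E w (fun i => x i * y (σ (η i))) =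
      ((k - r).factorial : ℝ) * polyForm r E w x *
        polyForm r (completeEdges r k) (fun _ => 1) y := by
  have hedge (e) (he : e ∈ E) :
      ∑ σ : Equiv.Perm (Fin k), w e * ∏ i ∈ e, x i * y (σ (η i)) =
        (k - r)! * (w e * ∏ i ∈ e, x i) * (r ! * ∑ t ∈ powersetCard r univ, ∏ j ∈ t, y j) := by
    simp only [prod_mul_distrib, ← mul_sum,
      Equiv.Perm.sum_prod_comp_of_injOn y (hη e he), hunif e he, Fintype.card_fin, nsmul_eq_mul]
    push_cast
    ring
  simp only [polyForm, completeEdges, one_mul, ← mul_sum]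
  rw [sum_comm, sum_congr rfl hedge, ← sum_mul, ← mul_sum]
  ring

/-- Equation (6) of the paper: if `η : [n] → [k]` is injective on every edge of the
weighted `r`-graph `G_w` (with `k ≥ r ≥ 2`), and for each permutation `σ` of `[k]`
the vector `z_σ` is defined by `(z_σ)_i = x_i · y_{σ(η(i))}`, then
`∑_{σ ∈ S_k} P_{G_w}(z_σ) = (k-r)! · P_{G_w}(x) · P_{K_k^r}(y)`. -/
theorem sum_perm_polyForm (r k n : ℕ)
    (hr2 : 2 ≤ r) (hkr : r ≤ k)
    (E : Finset (Finset (Fin n))) (w : Finset (Fin n) → ℝ)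
    (hunif : ∀ e ∈ E, e.card = r)
    (η : Fin n → Fin k) (hη : ∀ e ∈ E, Set.InjOn η (e : Set (Fin n)))
    (x : Fin n → ℝ) (y : Fin k → ℝ) :
    ∑ σ : Equiv.Perm (Fin k), polyForm r E w (fun i => x i * y (σ (η i))) =
      ((k - r).factorial : ℝ) * polyForm r E w x *
        polyForm r (completeEdges r k) (fun _ => 1) y :=
  sum_perm_polyForm_general r k n E w hunif η hη x y
end

section
/- Let k ≥ r ≥ 2 be integers and p ≥ r a real number. Let η : [n] → [k] be any map, let x ∈ ℝ^n satisfy ∑_{i=1}^n |x_i|^p = 1, and let y ∈ ℝ^k satisfy ∑_{j=1}^k |y_j|^p = 1. Then ∑_{σ ∈ S_k} ( ∑_{i=1}^n |x_i|^p |y_{σ(η(i))}|^p )^{r/p} ≤ k^{1−r/p} · (k−1)!, where the sum is over all k! permutations σ of [k]. -/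
open Finset
open scoped Nat

/-
Writing `a σ = ∑ᵢ |xᵢ|ᵖ |y_{σ(η i)}|ᵖ`, each point is sent to each value by exactly `(k-1)!`
permutations, so `∑_σ a σ = (k-1)! ∑ᵢ |xᵢ|ᵖ ∑ⱼ |yⱼ|ᵖ = (k-1)!`. Concavity of `s ↦ s^{r/p}` on the
`k!` numbers `a σ` then gives `∑_σ (a σ)^{r/p} ≤ (k!)^{1-r/p} ((k-1)!)^{r/p} = k^{1-r/p} (k-1)!`.
-/

namespace Equiv.Perm

variable {α M : Type*} [Fintype α] [DecidableEq α] [AddCommMonoid M]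

theorem sum_apply_eq_sum_apply (f : α → M) (a b : α) :
    ∑ σ : Perm α, f (σ a) = ∑ σ : Perm α, f (σ b) :=
  Fintype.sum_equiv (Equiv.mulRight (swap a b)) _ _ fun σ => by simp

theorem card_smul_sum_apply (f : α → M) (a : α) :
    Fintype.card α • ∑ σ : Perm α, f (σ a) = (Fintype.card α)! • ∑ b, f b :=
  calc Fintype.card α • ∑ σ : Perm α, f (σ a)
      = ∑ b, ∑ σ : Perm α, f (σ b) := by
        rw [← card_univ, ← sum_const]
        exact sum_congr rfl fun b _ => sum_apply_eq_sum_apply f a b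
    _ = ∑ σ : Perm α, ∑ b, f b := by
        rw [sum_comm]
        exact sum_congr rfl fun σ _ => Equiv.sum_comp σ f
    _ = (Fintype.card α)! • ∑ b, f b := by
        rw [sum_const, card_univ, Fintype.card_perm]

theorem sum_apply [IsAddTorsionFree M] (f : α → M) (a : α) :
    ∑ σ : Perm α, f (σ a) = (Fintype.card α - 1)! • ∑ b, f b := by
  have hcard : Fintype.card α ≠ 0 := (Fintype.card_pos_iff.mpr ⟨a⟩).ne'
  refine IsAddTorsionFree.nsmul_right_injective hcard ?_
  simp only [card_smul_sum_apply, smul_smul, Nat.mul_factorial_pred hcard]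

end Equiv.Perm

theorem Real.sum_rpow_le_card_rpow_mul_rpow_sum {ι : Type*} (s : Finset ι) {f : ι → ℝ}
    (hf : ∀ i ∈ s, 0 ≤ f i) {t : ℝ} (ht₀ : 0 ≤ t) (ht₁ : t ≤ 1) :
    ∑ i ∈ s, f i ^ t ≤ (#s : ℝ) ^ (1 - t) * (∑ i ∈ s, f i) ^ t := by
  rcases s.eq_empty_or_nonempty with rfl | hs
  · simp only [sum_empty]; positivity
  have hcard : (0 : ℝ) < #s := by exact_mod_cast hs.card_pos
  have jensen : ∑ i ∈ s, (#s : ℝ)⁻¹ • f i ^ t ≤ (∑ i ∈ s, (#s : ℝ)⁻¹ • f i) ^ t :=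
    (Real.concaveOn_rpow ht₀ ht₁).le_map_sum (fun _ _ => by positivity)
      (by simp [hcard.ne']) hf
  simp only [smul_eq_mul, ← mul_sum] at jensen
  rw [Real.mul_rpow (by positivity) (sum_nonneg hf), Real.inv_rpow hcard.le] at jensen
  calc ∑ i ∈ s, f i ^ t
      = #s * ((#s : ℝ)⁻¹ * ∑ i ∈ s, f i ^ t) := by field_simp
    _ ≤ #s * ((#s : ℝ) ^ t)⁻¹ * (∑ i ∈ s, f i) ^ t := by
        rw [mul_assoc]; gcongr
    _ = (#s : ℝ) ^ (1 - t) * (∑ i ∈ s, f i) ^ t := by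
        rw [Real.rpow_sub hcard, Real.rpow_one, div_eq_mul_inv]

theorem sum_perm_pow_le_general (r k n : ℕ) (p : ℝ)
    (hp : (r : ℝ) ≤ p)
    (η : Fin n → Fin k) (x : Fin n → ℝ) (y : Fin k → ℝ)
    (hx : ∑ i, |x i| ^ p = 1) (hy : ∑ j, |y j| ^ p = 1) :
    ∑ σ : Equiv.Perm (Fin k), (∑ i, |x i| ^ p * |y (σ (η i))| ^ p) ^ ((r : ℝ) / p) ≤
      (k : ℝ) ^ (1 - (r : ℝ) / p) * ((k - 1).factorial : ℝ) := by
  have hk : k ≠ 0 := by rintro rfl; simp at hy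
  have ht₀ : 0 ≤ (r : ℝ) / p := div_nonneg r.cast_nonneg (r.cast_nonneg.trans hp)
  have ht₁ : (r : ℝ) / p ≤ 1 := div_le_one_of_le₀ hp (r.cast_nonneg.trans hp)
  have hsum : ∑ σ : Equiv.Perm (Fin k), ∑ i, |x i| ^ p * |y (σ (η i))| ^ p = ((k - 1)! : ℕ) := by
    rw [sum_comm]
    simp only [← mul_sum, Equiv.Perm.sum_apply (fun j => |y j| ^ p),
      hy, Fintype.card_fin, nsmul_eq_mul, mul_one, ← sum_mul, hx, one_mul]
  calc _ ≤ ((k ! : ℕ) : ℝ) ^ (1 - (r : ℝ) / p) * (((k - 1)! : ℕ) : ℝ) ^ ((r : ℝ) / p) := by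
        simpa only [hsum, card_univ, Fintype.card_perm, Fintype.card_fin] using
          Real.sum_rpow_le_card_rpow_mul_rpow_sum univ
            (f := fun σ : Equiv.Perm (Fin k) => ∑ i, |x i| ^ p * |y (σ (η i))| ^ p)
            (fun σ _ => by positivity) ht₀ ht₁
    _ = (k : ℝ) ^ (1 - (r : ℝ) / p) * ((k - 1).factorial : ℝ) := by
        rw [← Nat.mul_factorial_pred hk, Nat.cast_mul,
          Real.mul_rpow (by positivity) (by positivity), mul_assoc, ← Real.rpow_add' (by positivity) (by norm_num), sub_add_cancel, Real.rpow_one]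

/-- Inequality (7) of the paper: for `k ≥ r ≥ 2`, real `p ≥ r`, any map
`η : [n] → [k]`, and any `x ∈ ℝ^n`, `y ∈ ℝ^k` with `∑ |x_i|^p = ∑ |y_j|^p = 1`:
`∑_{σ ∈ S_k} (∑_i |x_i|^p |y_{σ(η(i))}|^p)^{r/p} ≤ k^{1-r/p} (k-1)!`. -/
theorem sum_perm_pow_le (r k n : ℕ) (p : ℝ)
    (hr2 : 2 ≤ r) (hkr : r ≤ k) (hp : (r : ℝ) ≤ p)
    (η : Fin n → Fin k) (x : Fin n → ℝ) (y : Fin k → ℝ)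
    (hx : ∑ i, |x i| ^ p = 1) (hy : ∑ j, |y j| ^ p = 1) :
    ∑ σ : Equiv.Perm (Fin k), (∑ i, |x i| ^ p * |y (σ (η i))| ^ p) ^ ((r : ℝ) / p) ≤
      (k : ℝ) ^ (1 - (r : ℝ) / p) * ((k - 1).factorial : ℝ) :=
  sum_perm_pow_le_general r k n p hp η x y hx hy
end

section
/- (Hoffman's bound) Let G be a finite simple graph with at least one edge, let χ(G) be its chromatic number, and let λ(G) and λ_min(G) be the largest and smallest eigenvalues of its adjacency matrix. Then χ(G) ≥ 1 − λ(G)/λ_min(G). -/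
/-!
Let `x` be a unit eigenvector for `λ = λ(G)` and split `x = ∑ c, x_c` along the `k` colour classes
of a proper colouring. The pieces are orthogonal and each is supported on an independent set, so
`x_cᵀ A x_c = 0`. Summing the Rayleigh bound `λ_min ‖y‖² ≤ yᵀ A y` over the `k` test vectors
`y = x - k x_c` gives `λ_min k (k - 1) ≤ -k λ`, i.e. `λ ≤ -λ_min (k - 1)`. An edge `ab` forces
`λ_min ≤ -1` (test `e_a - e_b`), so dividing by `λ_min < 0` yields `k ≥ 1 - λ / λ_min`.
-/

open Matrix

theorem sum_indicator_fiber {ι κ M : Type*} [Fintype κ] [AddCommMonoid M] (f : ι → κ)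
    (x : ι → M) : ∑ c, (f ⁻¹' {c}).indicator x = x := by
  classical
  ext i
  simp [Finset.sum_apply, Set.indicator_apply, eq_comm]

theorem sum_indicator_fiber_dotProduct_self {ι κ R : Type*} [Fintype ι] [Fintype κ]
    [NonUnitalNonAssocSemiring R] (f : ι → κ) (x : ι → R) :
    ∑ c, (f ⁻¹' {c}).indicator x ⬝ᵥ (f ⁻¹' {c}).indicator x = x ⬝ᵥ x := by
  simp only [dotProduct, ← Set.indicator_mul]
  rw [Finset.sum_comm]
  refine Finset.sum_congr rfl fun i _ ↦ ?_
  rw [← Finset.sum_apply, sum_indicator_fiber]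

namespace Matrix.IsHermitian

variable {n : Type*} [Fintype n] [DecidableEq n] {A : Matrix n n ℝ}

theorem posSemidef_sub_iInf_eigenvalues_smul_one (hA : A.IsHermitian) :
    (A - (⨅ i, hA.eigenvalues i) • 1).PosSemidef := by
  set μ := ⨅ i, hA.eigenvalues i
  have hconj : A - μ • 1 = Unitary.conjStarAlgAut ℝ _ hA.eigenvectorUnitary
      (diagonal fun i ↦ hA.eigenvalues i - μ) := by
    conv_lhs => rw [hA.spectral_theorem]
    rw [← map_one (Unitary.conjStarAlgAut ℝ _ hA.eigenvectorUnitary), ← map_smul, ← map_sub,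
      ← diagonal_one, ← diagonal_smul, diagonal_sub]
    simp
  rw [hconj, Unitary.conjStarAlgAut_apply,
    (Unitary.isUnit_coe).posSemidef_star_right_conjugate_iff, posSemidef_diagonal_iff]
  exact fun i ↦ sub_nonneg.2 (ciInf_le (Finite.bddBelow_range _) i)

theorem iInf_eigenvalues_mul_dotProduct_self_le (hA : A.IsHermitian) (x : n → ℝ) :
    (⨅ i, hA.eigenvalues i) * (x ⬝ᵥ x) ≤ x ⬝ᵥ (A *ᵥ x) := by
  have := hA.posSemidef_sub_iInf_eigenvalues_smul_one.dotProduct_mulVec_nonneg x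
  rw [star_trivial, sub_mulVec, smul_mulVec, one_mulVec, dotProduct_sub, dotProduct_smul,
    smul_eq_mul] at this
  linarith

theorem exists_dotProduct_self_eq_one_and_dotProduct_mulVec_eq_iSup [Nonempty n]
    (hA : A.IsHermitian) :
    ∃ x : n → ℝ, x ⬝ᵥ x = 1 ∧ x ⬝ᵥ (A *ᵥ x) = ⨆ i, hA.eigenvalues i := by
  obtain ⟨j, hj⟩ : ∃ j, hA.eigenvalues j = ⨆ i, hA.eigenvalues i := exists_eq_ciSup_of_finite
  have hnorm : ⇑(hA.eigenvectorBasis j) ⬝ᵥ ⇑(hA.eigenvectorBasis j) = 1 := by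
    have h := inner_self_eq_one_of_norm_eq_one (𝕜 := ℝ) (hA.eigenvectorBasis.orthonormal.1 j)
    rwa [EuclideanSpace.inner_eq_star_dotProduct, star_trivial] at h
  refine ⟨_, hnorm, ?_⟩
  rw [mulVec_eigenvectorBasis, dotProduct_smul, hnorm, smul_eq_mul, mul_one, hj]

end Matrix.IsHermitian

namespace Matrix

variable {n : Type*} [Fintype n]

theorem mul_card_sub_one_mul_dotProduct_self_le {κ : Type*} [Fintype κ] (A : Matrix n n ℝ)
    {μ : ℝ} (hμ : ∀ y, μ * (y ⬝ᵥ y) ≤ y ⬝ᵥ A *ᵥ y) {x : n → ℝ} (v : κ → n → ℝ)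
    (hsum : ∑ c, v c = x) (hnorm : ∑ c, v c ⬝ᵥ v c = x ⬝ᵥ x) (hv : ∀ c, v c ⬝ᵥ A *ᵥ v c = 0) :
    μ * (Fintype.card κ - 1) * (x ⬝ᵥ x) ≤ -(x ⬝ᵥ A *ᵥ x) := by
  rcases isEmpty_or_nonempty κ with _ | _
  · simp [← hsum]
  set k := (Fintype.card κ : ℝ)
  have hk : 0 < k := by positivity
  have hnorm_sum : ∑ c, (x - k • v c) ⬝ᵥ (x - k • v c) = k * (k - 1) * (x ⬝ᵥ x) := by
    simp only [dotProduct_sub, sub_dotProduct, dotProduct_smul, smul_dotProduct, smul_eq_mul,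
      Finset.sum_sub_distrib, ← Finset.mul_sum, ← dotProduct_sum, ← sum_dotProduct, hsum, hnorm]
    simp only [Finset.sum_const, Finset.card_univ, ← Nat.cast_smul_eq_nsmul ℝ, smul_dotProduct,
      smul_eq_mul, dotProduct_comm x]
    ring
  have hquad_sum : ∑ c, (x - k • v c) ⬝ᵥ A *ᵥ (x - k • v c) = -k * (x ⬝ᵥ A *ᵥ x) := by
    simp only [mulVec_sub, mulVec_smul, dotProduct_sub, sub_dotProduct, dotProduct_smul,
      smul_dotProduct, smul_eq_mul, hv, Finset.sum_sub_distrib, ← Finset.mul_sum,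
      ← dotProduct_sum, ← sum_dotProduct, ← mulVec_sum, hsum]
    simp only [Finset.sum_const, Finset.card_univ, ← Nat.cast_smul_eq_nsmul ℝ, mulVec_smul,
      dotProduct_smul, smul_eq_mul, mul_zero]
    ring
  have key : ∑ c, μ * ((x - k • v c) ⬝ᵥ (x - k • v c)) ≤
      ∑ c, (x - k • v c) ⬝ᵥ A *ᵥ (x - k • v c) :=
    Finset.sum_le_sum fun c _ ↦ hμ _
  rw [← Finset.mul_sum, hnorm_sum, hquad_sum] at key
  nlinarith

end Matrix

namespace SimpleGraph

variable {V : Type*} [Fintype V] {G : SimpleGraph V} [DecidableRel G.Adj]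

theorem IsIndepSet.indicator_dotProduct_adjMatrix_mulVec_indicator {R : Type*}
    [NonAssocSemiring R] {s : Set V} (hs : G.IsIndepSet s) (x : V → R) :
    s.indicator x ⬝ᵥ G.adjMatrix R *ᵥ s.indicator x = 0 := by
  classical
  simp only [dotProduct, mulVec, Finset.mul_sum]
  refine Finset.sum_eq_zero fun i _ ↦ Finset.sum_eq_zero fun j _ ↦ ?_
  by_cases hi : i ∈ s
  · by_cases hj : j ∈ s
    · have hij : ¬G.Adj i j := fun h ↦ hs hi hj h.ne h
      simp [adjMatrix_apply, hij]
    · simp [hj]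
  · simp [hi]

theorem iInf_eigenvalues_adjMatrix_le_neg_one [DecidableEq V] {a b : V} (hab : G.Adj a b)
    (hA : (G.adjMatrix ℝ).IsHermitian) : ⨅ i, hA.eigenvalues i ≤ -1 := by
  set y : V → ℝ := Pi.single a 1 - Pi.single b 1
  have hne : a ≠ b := hab.ne
  have hyy : y ⬝ᵥ y = 2 := by
    simp [y, dotProduct_sub, hne, hne.symm]
    norm_num
  have hyAy : y ⬝ᵥ G.adjMatrix ℝ *ᵥ y = -2 := by
    simp [y, mulVec_sub, dotProduct_sub, sub_dotProduct, mulVec_single, adjMatrix_apply, hab,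
      hab.symm]
    norm_num
  have := hA.iInf_eigenvalues_mul_dotProduct_self_le y
  rw [hyy, hyAy] at this
  linarith

theorem Coloring.iSup_eigenvalues_adjMatrix_le [DecidableEq V] [Nonempty V] {α : Type*}
    [Fintype α] (C : G.Coloring α) (hA : (G.adjMatrix ℝ).IsHermitian) :
    ⨆ i, hA.eigenvalues i ≤ -(⨅ i, hA.eigenvalues i) * (Fintype.card α - 1) := by
  obtain ⟨x, hxx, hxAx⟩ := hA.exists_dotProduct_self_eq_one_and_dotProduct_mulVec_eq_iSup
  have := mul_card_sub_one_mul_dotProduct_self_le _ hA.iInf_eigenvalues_mul_dotProduct_self_le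
    (fun c ↦ (C.colorClass c).indicator x) (sum_indicator_fiber C x)
    (sum_indicator_fiber_dotProduct_self C x)
    fun c ↦ (C.isIndepSet_colorClass c).indicator_dotProduct_adjMatrix_mulVec_indicator x
  rw [hxx, hxAx] at this
  linarith

end SimpleGraph

/-- **Hoffman's bound.** For a finite simple graph `G` with at least one edge,
`χ(G) ≥ 1 - λ(G)/λ_min(G)`, where `λ(G)` and `λ_min(G)` are the largest and
smallest eigenvalues of the adjacency matrix of `G`. -/
theorem hoffman_bound (n : ℕ) (G : SimpleGraph (Fin n)) [DecidableRel G.Adj]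
    (hE : ∃ a b, G.Adj a b)
    (hA : (G.adjMatrix ℝ).IsHermitian) :
    ((G.chromaticNumber.toNat : ℝ)) ≥
      1 - (⨆ i, hA.eigenvalues i) / (⨅ i, hA.eigenvalues i) := by
  obtain ⟨a, b, hab⟩ := hE
  have : Nonempty (Fin n) := ⟨a⟩
  obtain ⟨C⟩ := G.colorable_chromaticNumber_of_fintype
  have hmin := G.iInf_eigenvalues_adjMatrix_le_neg_one hab hA
  have hmax := C.iSup_eigenvalues_adjMatrix_le hA
  rw [Fintype.card_fin] at hmax
  have hratio : 1 - (G.chromaticNumber.toNat : ℝ) ≤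
      (⨆ i, hA.eigenvalues i) / (⨅ i, hA.eigenvalues i) :=
    (le_div_iff_of_neg (by linarith)).2 (by linarith)
  linarith
end

section
/- Let n ≥ 2 be an even integer, and let G be the 4-graph on 2n vertices whose vertex set is the disjoint union of sets A and B with |A| = |B| = n, and whose edges are all 4-element vertex sets intersecting A in exactly two vertices. Then for every real p ≥ 2, λ_min^(p)(G) > −4! · 2n^3 / (2n)^{4/p} = −48 n^3 / (2n)^{4/p}. -/
open Finset

/-- The `4`-graph of Section 2 of the paper: the vertex set is the disjoint union
`A ⊕ B` of two sets of size `n` (`A` = left copy of `Fin n`, `B` = right copy), and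
the edges are all `4`-element vertex sets intersecting `A` in exactly two vertices. -/
def crossEdges (n : ℕ) : Finset (Finset (Fin n ⊕ Fin n)) :=
  (Finset.univ.powersetCard 4).filter
    (fun e => (e.filter (fun v => v.isLeft = true)).card = 2)

/-!
Write `u` and `v` for the second elementary symmetric polynomials of the coordinates of `x` on
`A` and on `B`; the form factors as `P(x) = 4! · u v`. The identity
`(∑ aᵢ)² = ∑ aᵢ² + 2 e₂(a)` together with Cauchy–Schwarz gives `-Q_A/2 ≤ u ≤ (n-1) Q_A/2`, where
`Q_A = ∑_{i ∈ A} xᵢ²`, and likewise for `v`; as both intervals contain `0`, the product is at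
least `-(n-1) Q_A Q_B / 4 ≥ -(n-1) |x|₂⁴ / 16`. On the unit `ℓ^p` sphere the power-mean
inequality gives `|x|₂² ≤ (2n)^{1-2/p}`, hence `λ_min ≥ -6n²(n-1)/(2n)^{4/p}`.
-/

theorem Finset.sq_sum_eq_sum_sq_add_two_mul_sum_powersetCard_two {ι R : Type*}
    [DecidableEq ι] [CommRing R] (s : Finset ι) (a : ι → R) :
    (∑ i ∈ s, a i) ^ 2 = ∑ i ∈ s, a i ^ 2 + 2 * ∑ t ∈ s.powersetCard 2, ∏ i ∈ t, a i := by
  induction s using Finset.induction_on with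
  | empty => rw [powersetCard_eq_empty.2 (by simp)]; simp
  | @insert x s hx ih =>
    have hdisj : Disjoint (s.powersetCard 2) ((s.powersetCard 1).image (insert x)) := by
      refine disjoint_left.2 fun t ht ht' => ?_
      obtain ⟨u, -, rfl⟩ := mem_image.1 ht'
      exact hx ((mem_powersetCard.1 ht).1 (mem_insert_self x u))
    have hinj : Set.InjOn (insert x) (s.powersetCard 1 : Set (Finset ι)) := by
      intro u hu v hv h
      have hxu : x ∉ u := fun h' => hx ((mem_powersetCard.1 hu).1 h')
      have hxv : x ∉ v := fun h' => hx ((mem_powersetCard.1 hv).1 h')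
      rw [← erase_insert hxu, ← erase_insert hxv, h]
    have hpairs : ∑ t ∈ s.powersetCard 1, ∏ i ∈ insert x t, a i = a x * ∑ i ∈ s, a i := by
      rw [mul_sum, powersetCard_one, sum_map]
      refine sum_congr rfl fun i hi => ?_
      have hxi : x ∉ ({i} : Finset ι) := by
        rw [mem_singleton]; rintro rfl; exact hx hi
      simp [prod_insert hxi]
    rw [sum_insert hx, sum_insert hx, powersetCard_succ_insert hx,
      sum_union hdisj, sum_image hinj, hpairs]
    linear_combination ih

theorem Finset.neg_sum_sq_le_two_mul_sum_powersetCard_two {ι : Type*} [DecidableEq ι]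
    (s : Finset ι) (a : ι → ℝ) :
    -∑ i ∈ s, a i ^ 2 ≤ 2 * ∑ t ∈ s.powersetCard 2, ∏ i ∈ t, a i := by
  have := s.sq_sum_eq_sum_sq_add_two_mul_sum_powersetCard_two a
  nlinarith [sq_nonneg (∑ i ∈ s, a i)]

theorem Finset.two_mul_sum_powersetCard_two_le {ι : Type*} [DecidableEq ι]
    (s : Finset ι) (a : ι → ℝ) :
    2 * ∑ t ∈ s.powersetCard 2, ∏ i ∈ t, a i ≤ (#s - 1) * ∑ i ∈ s, a i ^ 2 := by
  have := s.sq_sum_eq_sum_sq_add_two_mul_sum_powersetCard_two a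
  nlinarith [sq_sum_le_card_mul_sum_sq (s := s) (f := a)]

theorem neg_mul_le_mul_of_le_of_le {u v α β m : ℝ} (hm : 0 ≤ m)
    (hαu : -α ≤ u) (huα : u ≤ m * α) (hβv : -β ≤ v) (hvβ : v ≤ m * β) :
    -(m * α * β) ≤ u * v := by
  rcases le_or_gt 0 u with hu | hu <;> rcases le_or_gt 0 v with hv | hv
  · nlinarith [mul_nonneg hu hv]
  · nlinarith [mul_le_mul_of_nonpos_right huα hv.le, mul_le_mul_of_nonneg_left hβv hu]
  · nlinarith [mul_le_mul_of_nonpos_right hvβ hu.le, mul_le_mul_of_nonneg_left hαu hv]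
  · have hmαβ : 0 ≤ m * α * β := mul_nonneg (mul_nonneg hm (by linarith)) (by linarith)
    nlinarith [mul_pos_of_neg_of_neg hu hv]

theorem mem_crossEdges {n : ℕ} {e : Finset (Fin n ⊕ Fin n)} :
    e ∈ crossEdges n ↔ #e.toLeft = 2 ∧ #e.toRight = 2 := by
  have hleft :
      (e.filter fun v => v.isLeft = true) = e.toLeft.map ⟨Sum.inl, Sum.inl_injective⟩ := by
    ext (v | v) <;> simp
  have := e.card_toLeft_add_card_toRight
  simp only [crossEdges, mem_filter, mem_powersetCard, subset_univ, true_and, hleft, card_map]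
  omega

theorem sum_prod_crossEdges (n : ℕ) (x : Fin n ⊕ Fin n → ℝ) :
    ∑ e ∈ crossEdges n, ∏ i ∈ e, x i =
      (∑ s ∈ univ.powersetCard 2, ∏ i ∈ s, x (Sum.inl i)) *
        ∑ t ∈ univ.powersetCard 2, ∏ j ∈ t, x (Sum.inr j) := by
  rw [sum_mul_sum, ← sum_product']
  refine sum_nbij' (fun e => (e.toLeft, e.toRight)) (fun st => st.1.disjSum st.2)
    ?_ ?_ (fun e _ => e.toLeft_disjSum_toRight) (fun st _ => by simp) ?_
  · intro e he
    simpa [mem_powersetCard] using mem_crossEdges.1 he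
  · intro st hst
    rw [mem_product, mem_powersetCard, mem_powersetCard] at hst
    simp [mem_crossEdges, hst.1.2, hst.2.2]
  · intro e _
    conv_lhs => rw [← e.toLeft_disjSum_toRight]
    rw [prod_disjSum]

theorem polyForm_crossEdges_ge (n : ℕ) (x : Fin n ⊕ Fin n → ℝ) :
    -(3 / 2 * (n - 1) * (∑ i, x i ^ 2) ^ 2) ≤ polyForm 4 (crossEdges n) (fun _ => 1) x := by
  set u := ∑ s ∈ univ.powersetCard 2, ∏ i ∈ s, x (Sum.inl i)
  set v := ∑ t ∈ univ.powersetCard 2, ∏ j ∈ t, x (Sum.inr j)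
  set QA := ∑ i : Fin n, x (.inl i) ^ 2
  set QB := ∑ i : Fin n, x (.inr i) ^ 2
  have hP : polyForm 4 (crossEdges n) (fun _ => 1) x = 24 * (u * v) := by
    simp only [polyForm, one_mul, sum_prod_crossEdges]
    norm_num [Nat.factorial]
    rfl
  have hQ : ∑ i, x i ^ 2 = QA + QB := Fintype.sum_sum_type _
  obtain rfl | hn := n.eq_zero_or_pos
  · simp [hP, u, v, powersetCard_eq_empty.2 (by simp : #(∅ : Finset (Fin 0)) < 2)]
  have hm : (0 : ℝ) ≤ n - 1 := by rw [sub_nonneg]; exact_mod_cast hn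
  have huA := univ.two_mul_sum_powersetCard_two_le fun i => x (.inl i)
  have hvB := univ.two_mul_sum_powersetCard_two_le fun i => x (.inr i)
  rw [card_univ, Fintype.card_fin] at huA hvB
  have huv : -((n - 1) * (QA / 2) * (QB / 2)) ≤ u * v := neg_mul_le_mul_of_le_of_le hm
    (by linarith [univ.neg_sum_sq_le_two_mul_sum_powersetCard_two fun i => x (.inl i)])
    (by linarith)
    (by linarith [univ.neg_sum_sq_le_two_mul_sum_powersetCard_two fun i => x (.inr i)])
    (by linarith)
  rw [hP, hQ]
  nlinarith [mul_nonneg hm (sq_nonneg (QA - QB))]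

section UnitSphere

variable {V : Type*} [Fintype V] {p : ℝ}

theorem sum_abs_rpow_eq_one_of_lpNorm_eq_one (hp : p ≠ 0) {x : V → ℝ} (hx : lpNorm p x = 1) :
    ∑ i, |x i| ^ p = 1 := by
  have hs : 0 ≤ ∑ i, |x i| ^ p := sum_nonneg fun i _ => by positivity
  calc ∑ i, |x i| ^ p = ((∑ i, |x i| ^ p) ^ (1 / p)) ^ p := by
        rw [← Real.rpow_mul hs, one_div_mul_cancel hp, Real.rpow_one]
    _ = 1 := by rw [← lpNorm, hx, Real.one_rpow]

theorem lpNorm_pi_single [DecidableEq V] (hp : p ≠ 0) (i : V) :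
    lpNorm p (Pi.single i 1 : V → ℝ) = 1 := by
  rw [lpNorm, Fintype.sum_eq_single i fun j hj => by simp [hj, Real.zero_rpow hp]]
  simp

theorem le_lamMin [Nonempty V] {r : ℕ} {E : Finset (Finset V)} {w : Finset V → ℝ} {B : ℝ}
    (hp : p ≠ 0) (h : ∀ x, lpNorm p x = 1 → B ≤ polyForm r E w x) : B ≤ lamMin r p E w := by
  classical
  obtain ⟨i⟩ := ‹Nonempty V›
  exact le_csInf ⟨_, Pi.single i 1, lpNorm_pi_single hp i, rfl⟩ fun _ ⟨x, hx, hxt⟩ => hxt ▸ h x hx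

theorem sum_sq_le_card_rpow_of_sum_abs_rpow_eq_one (hp : 2 ≤ p) {x : V → ℝ}
    (hx : ∑ i, |x i| ^ p = 1) : ∑ i, x i ^ 2 ≤ (Fintype.card V : ℝ) ^ (1 - 2 / p) := by
  have hp0 : 0 < p := by linarith
  have hpow : ∀ i, (x i ^ 2) ^ (p / 2) = |x i| ^ p := fun i => by
    rw [← sq_abs, ← Real.rpow_natCast, ← Real.rpow_mul (abs_nonneg _)]
    norm_num [mul_div_cancel₀]
  have key := Real.rpow_sum_le_const_mul_sum_rpow_of_nonneg univ (f := fun i => x i ^ 2)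
    (by linarith : 1 ≤ p / 2) fun i _ => sq_nonneg _
  simp only [hpow, hx, mul_one, card_univ] at key
  have hQ : 0 ≤ ∑ i, x i ^ 2 := sum_nonneg fun i _ => sq_nonneg _
  calc ∑ i, x i ^ 2 = ((∑ i, x i ^ 2) ^ (p / 2)) ^ (2 / p) := by
        rw [← Real.rpow_mul hQ, div_mul_div_cancel₀ two_ne_zero, div_self hp0.ne', Real.rpow_one]
    _ ≤ ((Fintype.card V : ℝ) ^ (p / 2 - 1)) ^ (2 / p) := by gcongr
    _ = (Fintype.card V : ℝ) ^ (1 - 2 / p) := by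
        rw [← Real.rpow_mul (Nat.cast_nonneg _)]
        congr 1
        field_simp

end UnitSphere

theorem lamMin_crossEdges_gt_general (n : ℕ) (h2 : 2 ≤ n) (p : ℝ) (hp : 2 ≤ p) :
    lamMin 4 p (crossEdges n) (fun _ => 1) >
      -(48 * (n : ℝ) ^ 3 / (2 * (n : ℝ)) ^ ((4 : ℝ) / p)) := by
  have hn : (2 : ℝ) ≤ n := by exact_mod_cast h2
  set c := (2 * (n : ℝ)) ^ ((4 : ℝ) / p)
  have hc : 0 < c := by positivity
  have hcard : (Fintype.card (Fin n ⊕ Fin n) : ℝ) = 2 * n := by simp; ring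
  have : Nonempty (Fin n ⊕ Fin n) := ⟨.inl ⟨0, by omega⟩⟩
  have hsq : ((2 * (n : ℝ)) ^ (1 - 2 / p)) ^ 2 = 4 * n ^ 2 / c := by
    rw [← Real.rpow_natCast, ← Real.rpow_mul (by positivity),
      show (1 - 2 / p) * ((2 : ℕ) : ℝ) = 2 - 4 / p by push_cast; ring,
      Real.rpow_sub (by positivity)]
    norm_num [c]
    ring
  have hbound : -(6 * n ^ 2 * (n - 1) / c) ≤ lamMin 4 p (crossEdges n) (fun _ => 1) := by
    refine le_lamMin (by positivity) fun x hx => ?_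
    have hQ := sum_sq_le_card_rpow_of_sum_abs_rpow_eq_one hp
      (sum_abs_rpow_eq_one_of_lpNorm_eq_one (by positivity) hx)
    rw [hcard] at hQ
    calc -(6 * n ^ 2 * (n - 1) / c) = -(3 / 2 * (n - 1) * (4 * n ^ 2 / c)) := by ring
      _ ≤ -(3 / 2 * (n - 1) * (∑ i, x i ^ 2) ^ 2) := by
        rw [← hsq]
        gcongr
        linarith
      _ ≤ _ := polyForm_crossEdges_ge n x
  refine lt_of_lt_of_le ?_ hbound
  rw [neg_lt_neg_iff, div_lt_div_iff_of_pos_right hc]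
  nlinarith

/-- Lower-bound part of equation (13) of the paper: for even `n ≥ 2` and real
`p ≥ 2`, the `4`-graph `G` of Section 2 satisfies
`λ_min^(p)(G) > -4!·2n³/(2n)^{4/p} = -48n³/(2n)^{4/p}`. -/
theorem lamMin_crossEdges_gt (n : ℕ) (hn : Even n) (h2 : 2 ≤ n) (p : ℝ) (hp : 2 ≤ p) :
    lamMin 4 p (crossEdges n) (fun _ => 1) >
      -(48 * (n : ℝ) ^ 3 / (2 * (n : ℝ)) ^ ((4 : ℝ) / p)) :=
  lamMin_crossEdges_gt_general n h2 p hp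
end
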